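/- Let V be a 2n-dimensional real vector space with non-degenerate symmetric bilinear form g of signature (n, n), and h ≠ 0 a g-self-adjoint endomorphism with h² = 0 of rank m. After decomposing V = L₁ ⊕ ⋯ ⊕ L_m ⊕ W with each Lᵢ = span{Xᵢ, Yᵢ} of signature (1,1) as in the canonical basis construction, the restriction of g to W = (L₁ ⊕ ⋯ ⊕ L_m)^⊥ has signature (n − m, n − m) and h vanishes on W. -/

import Mathlib

/-!
The pairs `(Xᵢ, h Xᵢ)` are hyperbolic, so they span a subspace `U` of dimension `2m` on which `g`
is nondegenerate; hence `W = U^⊥` is a nondegenerate complement of dimension `2n - 2m`, and `g`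
diagonalises on `W` with `p` vectors of square `1` and `q` of square `-1`. The `p` positive vectors
of `W` and the `m` vectors `Xᵢ + εᵢ h Xᵢ` (of square `2εᵢ² > 0`) are mutually orthogonal, so they
span a positive definite subspace, which meets the negative half of the basis `e` trivially:
`p + m ≤ n`. The vectors `Xᵢ - εᵢ h Xᵢ` give `q + m ≤ n` in the same way, so `p = q = n - m`.
Finally the `h Xᵢ` are independent, hence span `range h`, and pairing `h w` against the `Xⱼ` shows
that `h w = 0` for `w ∈ W`.
-/

open Module Submodule

namespace LinearMap.BilinForm

variable {V : Type*} [AddCommGroup V] [Module ℝ V] {g : LinearMap.BilinForm ℝ V}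

section OrthogonalFamily

variable {σ τ : Type*} {F : σ → V} {G : τ → V}

theorem iIsOrtho.sumElim (hg : g.IsRefl) (hF : g.iIsOrtho F) (hG : g.iIsOrtho G)
    (hFG : ∀ s t, g (F s) (G t) = 0) : g.iIsOrtho (Sum.elim F G) := by
  rintro (s | t) (s' | t') hne
  · exact hF fun h => hne (congrArg _ h)
  · exact hFG s t'
  · exact hg _ _ (hFG s' t)
  · exact hG fun h => hne (congrArg _ h)

theorem iIsOrtho.neg (hF : g.iIsOrtho F) : (-g).iIsOrtho F := fun s t hst => by
  simpa using hF hst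

variable [Fintype σ]

theorem apply_sum_smul_self_of_iIsOrtho (hF : g.iIsOrtho F) (a : σ → ℝ) :
    g (∑ s, a s • F s) (∑ s, a s • F s) = ∑ s, a s ^ 2 * g (F s) (F s) := by
  classical
  simp only [map_sum, map_smul, LinearMap.coe_sum, Finset.sum_apply, LinearMap.smul_apply,
    smul_eq_mul]
  refine Finset.sum_congr rfl fun s _ => ?_
  rw [Finset.sum_eq_single s (fun t _ hts => by rw [hF hts, mul_zero]) (by simp)]
  ring

theorem eq_zero_of_mem_span_of_iIsOrtho (hF : g.iIsOrtho F) (hpos : ∀ s, 0 < g (F s) (F s))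
    {x : V} (hx : x ∈ span ℝ (Set.range F)) (hxx : g x x ≤ 0) : x = 0 := by
  obtain ⟨a, rfl⟩ := (mem_span_range_iff_exists_fun ℝ).mp hx
  rw [apply_sum_smul_self_of_iIsOrtho hF] at hxx
  have hterm : ∀ s ∈ Finset.univ, 0 ≤ a s ^ 2 * g (F s) (F s) := fun s _ =>
    mul_nonneg (sq_nonneg _) (hpos s).le
  have hzero :=
    (Finset.sum_eq_zero_iff_of_nonneg hterm).mp (le_antisymm hxx (Finset.sum_nonneg hterm))
  have ha : ∀ s, a s = 0 := fun s => by
    simpa [(hpos s).ne'] using hzero s (Finset.mem_univ s)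
  simp [ha]

theorem card_add_finrank_le_of_iIsOrtho [FiniteDimensional ℝ V] (hF : g.iIsOrtho F)
    (hpos : ∀ s, 0 < g (F s) (F s)) (N : Submodule ℝ V) (hN : ∀ x ∈ N, g x x ≤ 0) :
    Fintype.card σ + finrank ℝ N ≤ finrank ℝ V := by
  have hdisj : span ℝ (Set.range F) ⊓ N = ⊥ := eq_bot_iff.mpr fun x ⟨hxF, hxN⟩ =>
    (mem_bot ℝ).mpr (eq_zero_of_mem_span_of_iIsOrtho hF hpos hxF (hN x hxN))
  have hF_indep : LinearIndependent ℝ F :=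
    linearIndependent_of_iIsOrtho hF fun s => (hpos s).ne'
  have := finrank_sup_add_finrank_inf_eq (span ℝ (Set.range F)) N
  rw [hdisj, finrank_bot, add_zero, finrank_span_eq_card hF_indep] at this
  exact this ▸ finrank_le _

end OrthogonalFamily

section SignatureBasis

variable {ι κ ι' κ' : Type*}

structure IsSignatureBasis (g : LinearMap.BilinForm ℝ V) (b : Basis (ι ⊕ κ) ℝ V) : Prop where
  iIsOrtho : g.iIsOrtho b
  apply_inl : ∀ i, g (b (.inl i)) (b (.inl i)) = 1
  apply_inr : ∀ j, g (b (.inr j)) (b (.inr j)) = -1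

theorem isSignatureBasis_iff [DecidableEq ι] [DecidableEq κ] {b : Basis (ι ⊕ κ) ℝ V} :
    g.IsSignatureBasis b ↔ ∀ i j, g (b i) (b j) =
      if i = j then Sum.elim (fun _ => (1 : ℝ)) (fun _ => (-1 : ℝ)) i else 0 := by
  constructor
  · rintro ⟨hortho, hinl, hinr⟩ i j
    split_ifs with hij
    · subst hij
      rcases i with i | j
      exacts [hinl i, hinr j]
    · exact hortho hij
  · intro hb
    exact ⟨fun i j hij => by simpa [hij] using hb i j, fun i => by simpa using hb (.inl i) (.inl i),
      fun j => by simpa using hb (.inr j) (.inr j)⟩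

namespace IsSignatureBasis

variable {b : Basis (ι ⊕ κ) ℝ V} (hb : g.IsSignatureBasis b)
include hb

theorem nondegenerate : g.Nondegenerate := by
  refine (iIsOrtho.nondegenerate_iff_not_isOrtho_basis_self g b hb.iIsOrtho).mpr ?_
  rintro (i | j)
  · simp [hb.apply_inl i]
  · simp [hb.apply_inr j]

theorem reindex (e₁ : ι ≃ ι') (e₂ : κ ≃ κ') :
    g.IsSignatureBasis (b.reindex (e₁.sumCongr e₂)) where
  iIsOrtho i j hij := by
    change g (b.reindex _ i) (b.reindex _ j) = 0
    rw [Basis.reindex_apply, Basis.reindex_apply]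
    exact hb.iIsOrtho ((Equiv.symm _).injective.ne hij)
  apply_inl i := by simpa using hb.apply_inl (e₁.symm i)
  apply_inr j := by simpa using hb.apply_inr (e₂.symm j)

theorem neg : (-g).IsSignatureBasis (b.reindex (Equiv.sumComm ι κ)) where
  iIsOrtho i j hij := by
    change (-g) (b.reindex _ i) (b.reindex _ j) = 0
    rw [Basis.reindex_apply, Basis.reindex_apply, LinearMap.neg_apply, LinearMap.neg_apply,
      neg_eq_zero]
    exact hb.iIsOrtho ((Equiv.symm _).injective.ne hij)
  apply_inl j := by simp [hb.apply_inr j]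
  apply_inr i := by simp [hb.apply_inl i]

theorem card_le [Fintype ι] [Fintype κ] {σ : Type*} [Fintype σ] {F : σ → V}
    (hF : g.iIsOrtho F) (hpos : ∀ s, 0 < g (F s) (F s)) :
    Fintype.card σ ≤ Fintype.card ι := by
  have := Module.Finite.of_basis b
  have hneg : ∀ x ∈ span ℝ (Set.range (b ∘ Sum.inr)), g x x ≤ 0 := by
    intro x hx
    obtain ⟨a, rfl⟩ := (mem_span_range_iff_exists_fun ℝ).mp hx
    rw [apply_sum_smul_self_of_iIsOrtho (F := b ∘ Sum.inr)
      (hb.iIsOrtho.comp_of_injective Sum.inr_injective)]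
    exact Finset.sum_nonpos fun j _ => by simp [hb.apply_inr j]; positivity
  have hcard := card_add_finrank_le_of_iIsOrtho hF hpos _ hneg
  rw [finrank_span_eq_card (b.linearIndependent.comp _ Sum.inr_injective),
    finrank_eq_card_basis b, Fintype.card_sum] at hcard
  omega

theorem card_add_card_le [Fintype ι] [Fintype κ] {σ τ : Type*} [Fintype σ] [Fintype τ]
    (hg : g.IsRefl) {F : σ → V} {G : τ → V} (hF : g.iIsOrtho F) (hG : g.iIsOrtho G)
    (hFpos : ∀ s, 0 < g (F s) (F s)) (hGpos : ∀ t, 0 < g (G t) (G t))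
    (hFG : ∀ s t, g (F s) (G t) = 0) :
    Fintype.card σ + Fintype.card τ ≤ Fintype.card ι := by
  simpa using hb.card_le (hF.sumElim hg hG hFG) (by rintro (s | t); exacts [hFpos s, hGpos t])

end IsSignatureBasis

theorem exists_isSignatureBasis [FiniteDimensional ℝ V] (hg : g.IsSymm) (hnd : g.Nondegenerate) :
    ∃ (p q : ℕ) (b : Basis (Fin p ⊕ Fin q) ℝ V), g.IsSignatureBasis b := by
  classical
  obtain ⟨v, hv⟩ := exists_orthogonal_basis (isSymm_iff.mp hg)
  replace hv : g.iIsOrtho v := hv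
  set c := fun i => g (v i) (v i)
  have hc : ∀ i, c i ≠ 0 := hv.not_isOrtho_basis_self_of_nondegenerate hnd
  have hunit : ∀ i, IsUnit (Real.sqrt |c i|)⁻¹ := fun i =>
    (inv_pos.mpr (Real.sqrt_pos.mpr (abs_pos.mpr (hc i)))).ne'.isUnit
  set u := v.isUnitSMul hunit
  have hu : ∀ i, g (u i) (u i) = c i / |c i| := fun i => by
    simp only [u, Basis.isUnitSMul_apply, map_smul, LinearMap.smul_apply, smul_eq_mul]
    rw [← mul_assoc, ← mul_inv, Real.mul_self_sqrt (abs_nonneg _), inv_mul_eq_div]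
  have hu_ortho : g.iIsOrtho u := fun i j hij => by
    change g (u i) (u j) = 0
    simp only [u, Basis.isUnitSMul_apply, map_smul, LinearMap.smul_apply, smul_eq_mul]
    rw [show g (v i) (v j) = 0 from hv hij, mul_zero, mul_zero]
  set P := fun i => 0 < c i
  have hsig : g.IsSignatureBasis (u.reindex (Equiv.sumCompl P).symm) := by
    refine ⟨fun i j hij => ?_, fun i => ?_, fun j => ?_⟩
    · change g (u.reindex _ i) (u.reindex _ j) = 0
      rw [Basis.reindex_apply, Basis.reindex_apply, Equiv.symm_symm]
      exact hu_ortho ((Equiv.sumCompl P).injective.ne hij)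
    · simp only [Basis.reindex_apply, Equiv.symm_symm, Equiv.sumCompl_apply_inl, hu]
      rw [abs_of_pos i.2, div_self (hc i)]
    · simp only [Basis.reindex_apply, Equiv.symm_symm, Equiv.sumCompl_apply_inr, hu]
      rw [abs_of_neg (lt_of_le_of_ne (not_lt.mp j.2) (hc j)), div_neg, div_self (hc j)]
  exact ⟨_, _, _, hsig.reindex (Fintype.equivFin _) (Fintype.equivFin _)⟩

end SignatureBasis

section DualFamily

variable {κ : Type*} [Fintype κ] [DecidableEq κ] {F G : κ → V} {d : κ → ℝ}

theorem apply_sum_smul_of_dual (hFG : ∀ k l, g (F k) (G l) = if k = l then d k else 0)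
    (c : κ → ℝ) (l : κ) : g (∑ k, c k • F k) (G l) = c l * d l := by
  simp [hFG]

theorem linearIndependent_of_dual (hFG : ∀ k l, g (F k) (G l) = if k = l then d k else 0)
    (hd : ∀ k, d k ≠ 0) : LinearIndependent ℝ F := by
  refine Fintype.linearIndependent_iff.mpr fun c hc l => ?_
  have := apply_sum_smul_of_dual hFG c l
  rw [hc, map_zero, LinearMap.zero_apply, eq_comm] at this
  exact (mul_eq_zero.mp this).resolve_right (hd l)

theorem disjoint_orthogonal_of_dual (hg : g.IsRefl)
    (hFG : ∀ k l, g (F k) (G l) = if k = l then d k else 0) (hd : ∀ k, d k ≠ 0)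
    (hG : ∀ l, G l ∈ span ℝ (Set.range F)) :
    Disjoint (span ℝ (Set.range F)) (g.orthogonal (span ℝ (Set.range F))) := by
  refine disjoint_def.mpr fun x hx hx_orth => ?_
  obtain ⟨c, rfl⟩ := (mem_span_range_iff_exists_fun ℝ).mp hx
  have hc : ∀ l, c l = 0 := fun l => by
    have := apply_sum_smul_of_dual hFG c l
    rw [hg _ _ (hx_orth (G l) (hG l)), eq_comm] at this
    exact (mul_eq_zero.mp this).resolve_right (hd l)
  simp [hc]

end DualFamily

section HyperbolicFamily

variable {σ : Type*} [DecidableEq σ]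

structure IsHyperbolicFamily (g : LinearMap.BilinForm ℝ V) (X Y : σ → V) (ε : σ → ℝ) : Prop where
  ne_zero : ∀ i, ε i ≠ 0
  apply_left_left : ∀ i j, g (X i) (X j) = 0
  apply_right_right : ∀ i j, g (Y i) (Y j) = 0
  apply_left_right : ∀ i j, g (X i) (Y j) = if i = j then ε i else 0

namespace IsHyperbolicFamily

variable {X Y : σ → V} {ε : σ → ℝ} (hH : g.IsHyperbolicFamily X Y ε) (hg : g.IsSymm)
include hH hg

theorem apply_right_left (i j : σ) : g (Y i) (X j) = if i = j then ε i else 0 := by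
  rw [hg.eq, hH.apply_left_right]
  rcases eq_or_ne i j with rfl | hij
  · simp
  · simp [hij, hij.symm]

theorem dual (k l : σ ⊕ σ) :
    g (Sum.elim X Y k) (Sum.elim Y X l) = if k = l then Sum.elim ε ε k else 0 := by
  rcases k with i | i <;> rcases l with j | j <;>
    simp [hH.apply_left_left, hH.apply_right_right, hH.apply_left_right, hH.apply_right_left hg]

theorem finrank_span [Fintype σ] :
    finrank ℝ (span ℝ (Set.range X ∪ Set.range Y)) = Fintype.card σ + Fintype.card σ := by
  have hd : ∀ k, Sum.elim ε ε k ≠ 0 := by rintro (i | i) <;> exact hH.ne_zero i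
  rw [← Set.Sum.elim_range, finrank_span_eq_card (linearIndependent_of_dual (hH.dual hg) hd),
    Fintype.card_sum]

theorem isCompl_orthogonal [FiniteDimensional ℝ V] [Fintype σ] :
    IsCompl (span ℝ (Set.range X ∪ Set.range Y))
      (g.orthogonal (span ℝ (Set.range X ∪ Set.range Y))) := by
  have hd : ∀ k, Sum.elim ε ε k ≠ 0 := by rintro (i | i) <;> exact hH.ne_zero i
  have hG : ∀ l, Sum.elim Y X l ∈ span ℝ (Set.range (Sum.elim X Y)) := by
    rintro (i | i)
    exacts [subset_span ⟨.inr i, rfl⟩, subset_span ⟨.inl i, rfl⟩]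
  rw [← Set.Sum.elim_range, isCompl_orthogonal_iff_disjoint hg.isRefl]
  exact disjoint_orthogonal_of_dual hg.isRefl (hH.dual hg) hd hG

theorem nondegenerate_restrict_orthogonal [FiniteDimensional ℝ V] [Fintype σ]
    (hnd : g.Nondegenerate) :
    (g.restrict (g.orthogonal (span ℝ (Set.range X ∪ Set.range Y)))).Nondegenerate := by
  rw [restrict_nondegenerate_iff_isCompl_orthogonal hg.isRefl,
    orthogonal_orthogonal hnd hg.isRefl]
  exact (hH.isCompl_orthogonal hg).symm

theorem apply_add_smul (t : σ → ℝ) (i j : σ) :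
    g (X i + t i • Y i) (X j + t j • Y j) = if i = j then 2 * t i * ε i else 0 := by
  simp only [map_add, map_smul, LinearMap.add_apply, LinearMap.smul_apply, smul_eq_mul,
    hH.apply_left_left, hH.apply_right_right, hH.apply_left_right, hH.apply_right_left hg]
  split_ifs with hij
  · subst hij; ring
  · ring

theorem iIsOrtho_add_smul (t : σ → ℝ) : g.iIsOrtho fun i => X i + t i • Y i :=
  fun i j hij => (hH.apply_add_smul hg t i j).trans (if_neg hij)

theorem apply_add_smul_self (t : σ → ℝ) (i : σ) :
    g (X i + t i • Y i) (X i + t i • Y i) = 2 * t i * ε i := by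
  simpa using hH.apply_add_smul hg t i i

end IsHyperbolicFamily

end HyperbolicFamily

theorem IsHyperbolicFamily.exists_isSignatureBasis_restrict_orthogonal [FiniteDimensional ℝ V]
    (hg : g.IsSymm) {p q m : ℕ} {e : Basis (Fin p ⊕ Fin q) ℝ V} (he : g.IsSignatureBasis e)
    {X Y : Fin m → V} {ε : Fin m → ℝ} (hH : g.IsHyperbolicFamily X Y ε) :
    ∃ b : Basis (Fin (p - m) ⊕ Fin (q - m)) ℝ (g.orthogonal (span ℝ (Set.range X ∪ Set.range Y))),
      (g.restrict _).IsSignatureBasis b := by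
  set U := span ℝ (Set.range X ∪ Set.range Y)
  have hnd := he.nondegenerate
  obtain ⟨p', q', b, hb⟩ :=
    exists_isSignatureBasis (hg.restrict _) (hH.nondegenerate_restrict_orthogonal hg hnd)
  have hdim : p' + q' = p + q - (m + m) := by
    have := finrank_orthogonal hnd U
    rw [hH.finrank_span hg, finrank_eq_card_basis b, finrank_eq_card_basis e] at this
    simpa using this
  have hWU : ∀ w ∈ g.orthogonal U, ∀ t : Fin m → ℝ, ∀ j, g w (X j + t j • Y j) = 0 :=
    fun w hw t j => hg.isRefl _ _ <| hw _ <|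
      add_mem (subset_span (.inl ⟨j, rfl⟩)) (smul_mem _ _ (subset_span (.inr ⟨j, rfl⟩)))
  have hb_inl : ∀ i, g (b (.inl i)) (b (.inl i)) = 1 := hb.apply_inl
  have hb_inr : ∀ j, g (b (.inr j)) (b (.inr j)) = -1 := hb.apply_inr
  have hp : p' + m ≤ p := by
    simpa using he.card_add_card_le hg.isRefl
      (F := fun i => (b (.inl i) : V)) (G := fun j => X j + ε j • Y j)
      (hb.iIsOrtho.comp_of_injective Sum.inl_injective) (hH.iIsOrtho_add_smul hg ε)
      (fun i => by simp [hb_inl])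
      (fun j => by
        rw [hH.apply_add_smul_self hg]
        linarith [mul_self_pos.mpr (hH.ne_zero j)])
      (fun i j => hWU _ (b _).2 ε j)
  have hq : q' + m ≤ q := by
    simpa using he.neg.card_add_card_le hg.isRefl.neg
      (F := fun i => (b (.inr i) : V)) (G := fun j => X j + (-ε) j • Y j)
      (iIsOrtho.neg (hb.iIsOrtho.comp_of_injective Sum.inr_injective))
      (hH.iIsOrtho_add_smul hg _).neg
      (fun i => by simp [hb_inr])
      (fun j => by
        rw [LinearMap.neg_apply, LinearMap.neg_apply, hH.apply_add_smul_self hg,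
          Pi.neg_apply]
        linarith [mul_self_pos.mpr (hH.ne_zero j)])
      (fun i j => by
        rw [LinearMap.neg_apply, LinearMap.neg_apply, hWU _ (b _).2 (-ε) j, neg_zero])
  obtain rfl : p' = p - m := by omega
  obtain rfl : q' = q - m := by omega
  exact ⟨b, hb⟩

theorem map_eq_zero_of_forall_apply_map_eq_zero [FiniteDimensional ℝ V]
    {h : V →ₗ[ℝ] V} (hsa : ∀ x y, g (h x) y = g x (h y))
    {σ : Type*} [Fintype σ] [DecidableEq σ] {X : σ → V} {ε : σ → ℝ} (hε : ∀ i, ε i ≠ 0)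
    (hXhX : ∀ i j, g (X i) (h (X j)) = if i = j then ε i else 0)
    (hrank : finrank ℝ (LinearMap.range h) ≤ Fintype.card σ)
    {w : V} (hw : ∀ i, g (h (X i)) w = 0) : h w = 0 := by
  have hdual : ∀ k l, g (h (X k)) (X l) = if k = l then ε k else 0 := fun k l => by
    rw [hsa, hXhX]
  have hrange : span ℝ (Set.range fun i => h (X i)) = LinearMap.range h := by
    refine eq_of_le_of_finrank_le ?_ ?_
    · exact span_le.mpr (Set.range_subset_iff.mpr fun i => LinearMap.mem_range_self h (X i))
    · rwa [finrank_span_eq_card (linearIndependent_of_dual hdual hε)]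
  obtain ⟨c, hc⟩ :=
    (mem_span_range_iff_exists_fun ℝ).mp (hrange ▸ LinearMap.mem_range_self h w)
  have hc0 : ∀ l, c l = 0 := fun l => by
    have : g (X l) (∑ k, c k • h (X k)) = c l * ε l := by simp [hXhX]
    rw [hc, ← hsa, hw, eq_comm] at this
    exact (mul_eq_zero.mp this).resolve_right (hε l)
  simp [← hc, hc0]

end LinearMap.BilinForm

open LinearMap.BilinForm

theorem stmt16_general (V : Type*) [AddCommGroup V] [Module ℝ V] [FiniteDimensional ℝ V]
    (n m : ℕ)
    (g : LinearMap.BilinForm ℝ V) (hsym : ∀ x y, g x y = g y x)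
    -- g has signature (n, n) on the 2n-dimensional space V
    (e : Module.Basis (Fin n ⊕ Fin n) ℝ V)
    (hsig : ∀ i j, g (e i) (e j) =
      if i = j then Sum.elim (fun _ => (1 : ℝ)) (fun _ => (-1 : ℝ)) i else 0)
    (h : V →ₗ[ℝ] V) (hsa : ∀ x y, g (h x) y = g x (h y))
    (hrank : Module.finrank ℝ (LinearMap.range h) = m)
    -- the canonical vectors Xᵢ spanning the subspaces Lᵢ = span {Xᵢ, h Xᵢ}
    (X : Fin m → V) (ε : Fin m → ℝ) (hε : ∀ i, ε i = 1 ∨ ε i = -1)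
    (hXX : ∀ i, g (X i) (X i) = 0)
    (hhXhX : ∀ i, g (h (X i)) (h (X i)) = 0)
    (hXhX : ∀ i, g (X i) (h (X i)) = ε i)
    -- the Lᵢ are mutually g-orthogonal
    (horth₁ : ∀ i j, i ≠ j → g (X i) (X j) = 0)
    (horth₂ : ∀ i j, i ≠ j → g (X i) (h (X j)) = 0)
    (horth₃ : ∀ i j, i ≠ j → g (h (X i)) (h (X j)) = 0)
    -- W is the common orthogonal complement of the Lᵢ
    (W : Submodule ℝ V)
    (hW : W = g.orthogonal
      (Submodule.span ℝ (Set.range X ∪ Set.range (fun i => h (X i))))) :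
    (∀ w ∈ W, h w = 0) ∧
    ∃ b : Module.Basis (Fin (n - m) ⊕ Fin (n - m)) ℝ W,
      ∀ i j, g ((b i : V)) ((b j : V)) =
        if i = j then Sum.elim (fun _ => (1 : ℝ)) (fun _ => (-1 : ℝ)) i else 0 := by
  have hε0 : ∀ i, ε i ≠ 0 := fun i => by rcases hε i with hi | hi <;> simp [hi]
  have hXY : ∀ i j, g (X i) (h (X j)) = if i = j then ε i else 0 := fun i j => by
    split_ifs with hij
    exacts [hij ▸ hXhX i, horth₂ i j hij]
  have hH : g.IsHyperbolicFamily X (fun i => h (X i)) ε :=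
    ⟨hε0, fun i j => by rcases eq_or_ne i j with rfl | hij; exacts [hXX i, horth₁ i j hij],
      fun i j => by rcases eq_or_ne i j with rfl | hij; exacts [hhXhX i, horth₃ i j hij], hXY⟩
  subst hW
  refine ⟨fun w hw => map_eq_zero_of_forall_apply_map_eq_zero hsa hε0 hXY (by simp [hrank])
    fun i => hw _ (Submodule.subset_span (.inr ⟨i, rfl⟩)), ?_⟩
  obtain ⟨b, hb⟩ :=
    hH.exists_isSignatureBasis_restrict_orthogonal ⟨hsym⟩ (isSignatureBasis_iff.mpr hsig)
  exact ⟨b, isSignatureBasis_iff.mp hb⟩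

theorem stmt16 (V : Type*) [AddCommGroup V] [Module ℝ V] [FiniteDimensional ℝ V]
    (n m : ℕ) (hm : 1 ≤ m) (hmn : m ≤ n)
    (g : LinearMap.BilinForm ℝ V) (hsym : ∀ x y, g x y = g y x)
    -- g has signature (n, n) on the 2n-dimensional space V
    (e : Module.Basis (Fin n ⊕ Fin n) ℝ V)
    (hsig : ∀ i j, g (e i) (e j) =
      if i = j then Sum.elim (fun _ => (1 : ℝ)) (fun _ => (-1 : ℝ)) i else 0)
    (h : V →ₗ[ℝ] V) (hsa : ∀ x y, g (h x) y = g x (h y))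
    (hsq : h ∘ₗ h = 0)
    (hrank : Module.finrank ℝ (LinearMap.range h) = m)
    -- the canonical vectors Xᵢ spanning the subspaces Lᵢ = span {Xᵢ, h Xᵢ}
    (X : Fin m → V) (ε : Fin m → ℝ) (hε : ∀ i, ε i = 1 ∨ ε i = -1)
    (hXX : ∀ i, g (X i) (X i) = 0)
    (hhXhX : ∀ i, g (h (X i)) (h (X i)) = 0)
    (hXhX : ∀ i, g (X i) (h (X i)) = ε i)
    -- the Lᵢ are mutually g-orthogonal
    (horth₁ : ∀ i j, i ≠ j → g (X i) (X j) = 0)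
    (horth₂ : ∀ i j, i ≠ j → g (X i) (h (X j)) = 0)
    (horth₃ : ∀ i j, i ≠ j → g (h (X i)) (h (X j)) = 0)
    -- W is the common orthogonal complement of the Lᵢ
    (W : Submodule ℝ V)
    (hW : W = g.orthogonal
      (Submodule.span ℝ (Set.range X ∪ Set.range (fun i => h (X i))))) :
    (∀ w ∈ W, h w = 0) ∧
    ∃ b : Module.Basis (Fin (n - m) ⊕ Fin (n - m)) ℝ W,
      ∀ i j, g ((b i : V)) ((b j : V)) =
        if i = j then Sum.elim (fun _ => (1 : ℝ)) (fun _ => (-1 : ℝ)) i else 0 :=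
  stmt16_general V n m g hsym e hsig h hsa hrank X ε hε hXX hhXhX hXhX horth₁ horth₂ horth₃ W hW
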